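/- Let K = HahnSeries ℚ ℂ, let A be an m × n matrix over K and b ∈ K^m, all of whose entries have integer support, and let v ∈ ℚ^n. Let Cs ⊆ ℚ be a finite set of representatives such that: (i) distinct elements of Cs are incongruent modulo ℤ, (ii) some element of Cs is an integer, and (iii) every coordinate v_j is congruent modulo ℤ to some element of Cs. Then the following are equivalent: (1) there exists x ∈ K^n with A.mulVec x = b and Trop(x_j) = v_j for all j; (2) for every c ∈ Cs there exists y^{(c)} ∈ K^n such that A.mulVec y^{(c)} = R_c b, every (y^{(c)})_j has support contained in {s ∈ ℚ : s − c ∈ ℤ}, Trop((y^{(c)})_j) = v_j for every j with v_j − c ∈ ℤ, and Trop((y^{(c)})_j) > v_j for every j with v_j − c ∉ ℤ. -/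

import Mathlib

open scoped Classical in
/-- The coset restriction `R_c : HahnSeries ℚ ℂ → HahnSeries ℚ ℂ` keeping only the
coefficients at exponents congruent to `c` modulo `ℤ`. -/
noncomputable def cosetRestrict (c : ℚ) (x : HahnSeries ℚ ℂ) : HahnSeries ℚ ℂ where
  coeff s := if ∃ k : ℤ, s - c = (k : ℚ) then x.coeff s else 0
  isPWO_support' := x.isPWO_support'.mono (by
    intro s hs
    simp only [Function.mem_support, ne_eq] at hs ⊢
    intro h
    apply hs
    split_ifs <;> simp [h])

/-! Because `A` and `b` have integer support, the coset restriction `R_c` commutes with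
`x ↦ A x`, and `R_c b` is `b` for the integral class and `0` for every other class. So restricting
a solution `x` to each class gives the `y⁽ᶜ⁾`, and conversely `∑ c ∈ Cs, y⁽ᶜ⁾` solves `A x = b`.
The tropicalizations match since in coordinate `j` only the summand of the class of `v j` has a
term at exponent `v j`, all others starting strictly later.

Congruence modulo `ℤ` is expressed throughout as equality of fractional parts
(`Int.fract_eq_fract`). -/

open Finset HahnSeries

namespace HahnSeries

theorem lt_orderTop_sum {Γ R ι : Type*} [LinearOrder Γ] [AddCommMonoid R] {s : Finset ι}
    {f : ι → HahnSeries Γ R} {v : Γ} (h : ∀ i ∈ s, (v : WithTop Γ) < (f i).orderTop) :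
    (v : WithTop Γ) < (∑ i ∈ s, f i).orderTop := by
  induction s using Finset.cons_induction with
  | empty => simp
  | cons i s hi ih =>
    rw [forall_mem_cons] at h
    rw [sum_cons]
    exact (lt_min h.1 (ih h.2)).trans_le min_orderTop_le_orderTop_add

theorem orderTop_sum_eq_of_lt {Γ R ι : Type*} [LinearOrder Γ] [AddCommMonoid R] {s : Finset ι}
    {f : ι → HahnSeries Γ R} {i₀ : ι} (hi₀ : i₀ ∈ s) {v : Γ} (h₀ : (f i₀).orderTop = v)
    (h : ∀ i ∈ s, i ≠ i₀ → (v : WithTop Γ) < (f i).orderTop) :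
    (∑ i ∈ s, f i).orderTop = v := by
  classical
  have hrest : (f i₀).orderTop < (∑ i ∈ s.erase i₀, f i).orderTop :=
    h₀ ▸ lt_orderTop_sum fun i hi => h i (mem_of_mem_erase hi) (ne_of_mem_erase hi)
  rw [← add_sum_erase s f hi₀, orderTop_add_eq_left hrest, h₀]

end HahnSeries

def HasIntSupport {R : Type*} [Zero R] (x : HahnSeries ℚ R) : Prop :=
  ∀ s ∈ x.support, ∃ k : ℤ, s = (k : ℚ)

section cosetRestrict

variable (c : ℚ) (x : HahnSeries ℚ ℂ)

theorem coeff_cosetRestrict (s : ℚ) :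
    (cosetRestrict c x).coeff s = if Int.fract s = Int.fract c then x.coeff s else 0 := by
  simp only [cosetRestrict, ← Int.fract_eq_fract]

theorem support_cosetRestrict_subset : (cosetRestrict c x).support ⊆ x.support :=
  fun s hs h => hs (by rw [coeff_cosetRestrict, h, ite_self])

theorem support_cosetRestrict_subset_fract :
    (cosetRestrict c x).support ⊆ {s | Int.fract s = Int.fract c} :=
  fun s hs => by_contra fun h : Int.fract s ≠ Int.fract c =>
    hs (by rw [coeff_cosetRestrict, if_neg h])

theorem cosetRestrict_sum {ι : Type*} (t : Finset ι) (f : ι → HahnSeries ℚ ℂ) :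
    cosetRestrict c (∑ i ∈ t, f i) = ∑ i ∈ t, cosetRestrict c (f i) := by
  ext s
  simp only [coeff_cosetRestrict, coeff_sum]
  split_ifs <;> simp

/-- Multiplying by a series of integer support shifts exponents by integers, which preserves
their classes modulo `ℤ`. -/
theorem cosetRestrict_mul_of_hasIntSupport {a : HahnSeries ℚ ℂ} (ha : HasIntSupport a) :
    cosetRestrict c (a * x) = a * cosetRestrict c x := by
  ext s
  rw [coeff_cosetRestrict, coeff_mul,
    coeff_mul_right' x.isPWO_support (support_cosetRestrict_subset c x)]
  have hfract : ∀ ij ∈ Finset.antidiagonal a.isPWO_support x.isPWO_support s,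
      Int.fract ij.2 = Int.fract s := by
    intro ij hij
    rw [Finset.mem_antidiagonal] at hij
    obtain ⟨k, hk⟩ := ha _ hij.1
    rw [← hij.2.2, hk, Int.fract_intCast_add]
  split_ifs with hs
  · exact sum_congr rfl fun ij hij => by
      rw [coeff_cosetRestrict, if_pos ((hfract ij hij).trans hs)]
  · refine (sum_eq_zero fun ij hij => ?_).symm
    rw [coeff_cosetRestrict, if_neg fun h => hs ((hfract ij hij).symm.trans h), mul_zero]

theorem cosetRestrict_of_hasIntSupport (hx : HasIntSupport x) :
    cosetRestrict c x = if Int.fract c = 0 then x else 0 := by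
  ext s
  rw [coeff_cosetRestrict]
  by_cases hs : s ∈ x.support
  · obtain ⟨k, rfl⟩ := hx s hs
    simp only [Int.fract_intCast, @eq_comm _ (0 : ℚ)]
    split_ifs <;> simp
  · rw [mem_support, not_not] at hs
    split_ifs <;> simp [hs]

theorem orderTop_le_orderTop_cosetRestrict : x.orderTop ≤ (cosetRestrict c x).orderTop :=
  le_orderTop_iff_forall.2 fun _ hj => by
    rw [coeff_cosetRestrict, coeff_eq_zero_of_lt_orderTop hj, ite_self]

variable {c x} {v : ℚ}

theorem orderTop_cosetRestrict_of_fract_eq (hx : x.orderTop = v)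
    (hv : Int.fract v = Int.fract c) : (cosetRestrict c x).orderTop = v :=
  le_antisymm
    (orderTop_le_of_coeff_ne_zero <| by
      rw [coeff_cosetRestrict, if_pos hv]; exact coeff_orderTop_ne hx)
    (hx ▸ orderTop_le_orderTop_cosetRestrict c x)

theorem lt_orderTop_cosetRestrict_of_fract_ne (hx : x.orderTop = v)
    (hv : Int.fract v ≠ Int.fract c) : (v : WithTop ℚ) < (cosetRestrict c x).orderTop :=
  lt_of_le_of_ne (hx ▸ orderTop_le_orderTop_cosetRestrict c x) fun h =>
    orderTop_ne_of_coeff_eq_zero (by rw [coeff_cosetRestrict, if_neg hv]) h.symm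

end cosetRestrict

theorem sum_cosetRestrict_of_hasIntSupport {Cs : Finset ℚ}
    (hCs : Set.InjOn Int.fract (Cs : Set ℚ)) {c₀ : ℚ} (hc₀ : c₀ ∈ Cs) (hc₀int : Int.fract c₀ = 0)
    {x : HahnSeries ℚ ℂ} (hx : HasIntSupport x) : ∑ c ∈ Cs, cosetRestrict c x = x := by
  simp only [cosetRestrict_of_hasIntSupport _ _ hx]
  rw [sum_eq_single_of_mem c₀ hc₀ fun c hc hne =>
    if_neg fun h => hne (hCs hc hc₀ (h.trans hc₀int.symm)), if_pos hc₀int]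

theorem mulVec_cosetRestrict {m n : Type*} [Fintype n] {A : Matrix m n (HahnSeries ℚ ℂ)}
    (hA : ∀ i j, HasIntSupport (A i j)) (c : ℚ) (x : n → HahnSeries ℚ ℂ) :
    A.mulVec (fun j => cosetRestrict c (x j)) = fun i => cosetRestrict c (A.mulVec x i) := by
  funext i
  simp only [Matrix.mulVec, dotProduct, cosetRestrict_sum,
    cosetRestrict_mul_of_hasIntSupport _ _ (hA i _)]

/-- For a system `A.mulVec x = b` with integer-support entries and a target
vector `v ∈ ℚ^n`, solvability with `Trop (x j) = v j` is equivalent to the simultaneous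
solvability, for each congruence-class representative `c` in a set `Cs` (pairwise
incongruent mod `ℤ`, containing an integer, and meeting every class of some `v j`),
of the restricted system `A.mulVec y = R_c b` by a vector `y` supported in the coset
`c + ℤ` with `Trop (y j) = v j` when `v j ≡ c (mod ℤ)` and `Trop (y j) > v j` otherwise. -/
theorem trop_solvable_iff_congruence_classes (m n : ℕ)
    (A : Matrix (Fin m) (Fin n) (HahnSeries ℚ ℂ)) (b : Fin m → HahnSeries ℚ ℂ)
    (hA : ∀ i j, ∀ s ∈ (A i j).support, ∃ k : ℤ, s = (k : ℚ))
    (hb : ∀ i, ∀ s ∈ (b i).support, ∃ k : ℤ, s = (k : ℚ))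
    (v : Fin n → ℚ) (Cs : Finset ℚ)
    (hCs₁ : ∀ c ∈ Cs, ∀ c' ∈ Cs, (∃ k : ℤ, c - c' = (k : ℚ)) → c = c')
    (hCs₂ : ∃ c ∈ Cs, ∃ k : ℤ, c = (k : ℚ))
    (hCs₃ : ∀ j, ∃ c ∈ Cs, ∃ k : ℤ, v j - c = (k : ℚ)) :
    (∃ x : Fin n → HahnSeries ℚ ℂ, A.mulVec x = b ∧
        ∀ j, (x j).orderTop = (v j : WithTop ℚ)) ↔
    (∀ c ∈ Cs, ∃ y : Fin n → HahnSeries ℚ ℂ,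
        A.mulVec y = (fun i => cosetRestrict c (b i)) ∧
        (∀ j, (y j).support ⊆ {s : ℚ | ∃ k : ℤ, s - c = (k : ℚ)}) ∧
        (∀ j, (∃ k : ℤ, v j - c = (k : ℚ)) → (y j).orderTop = (v j : WithTop ℚ)) ∧
        (∀ j, ¬ (∃ k : ℤ, v j - c = (k : ℚ)) → (v j : WithTop ℚ) < (y j).orderTop)) := by
  simp only [← Int.fract_eq_fract] at hCs₁ hCs₃ ⊢
  have hinj : Set.InjOn Int.fract (Cs : Set ℚ) := fun c hc c' hc' => hCs₁ c hc c' hc'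
  constructor
  · rintro ⟨x, hAx, hx⟩ c -
    exact ⟨fun j => cosetRestrict c (x j), by rw [mulVec_cosetRestrict hA, hAx],
      fun j => support_cosetRestrict_subset_fract c (x j),
      fun j => orderTop_cosetRestrict_of_fract_eq (hx j),
      fun j => lt_orderTop_cosetRestrict_of_fract_ne (hx j)⟩
  · intro h
    choose! y hAy _ hy_eq hy_lt using h
    obtain ⟨c₀, hc₀, k, rfl⟩ := hCs₂
    refine ⟨∑ c ∈ Cs, y c, ?_, fun j => ?_⟩
    · calc A.mulVec (∑ c ∈ Cs, y c) = ∑ c ∈ Cs, A.mulVec (y c) := Matrix.mulVec_sum A Cs y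
        _ = b := by
          funext i
          rw [Finset.sum_apply, sum_congr rfl fun c hc => congrFun (hAy c hc) i]
          exact sum_cosetRestrict_of_hasIntSupport hinj hc₀ (Int.fract_intCast k) (hb i)
    · obtain ⟨c, hc, hvc⟩ := hCs₃ j
      rw [Finset.sum_apply]
      exact orderTop_sum_eq_of_lt hc (hy_eq c hc j hvc) fun c' hc' hne =>
        hy_lt c' hc' j fun h => hne (hinj hc' hc (h.symm.trans hvc))
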